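/- Let N ≥ 2 be even and let m', y be integers with 0 ≤ m' ≤ 2N and 2y ≥ m'. Then there is a 2×2 matrix polynomial Q such that Q(w) = (w−1)^N · A(w)^{N−m'} · w^{y−N/2} for all w ∈ ℂ ∖ {0, 1} (i.e. the right-hand side has removable singularities at w = 0 and w = 1 and extends to an entire matrix-valued function). Consequently, for every positively oriented circle γ centered at 0 whose interior contains a given point s ∈ ℂ ∖ {0, 1}, one has (2πi)⁻¹ ∮_γ (w−1)^N A(w)^{N−m'} w^{y−N/2} (w−s)⁻¹ dw = (s−1)^N A(s)^{N−m'} s^{y−N/2}. -/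

import Mathlib

/-!
Write `A(z) = (z - 1)⁻¹ M(z)` with `M` a polynomial matrix. Because `αβ = 1`, `M(z)² = z P(z)` with
`P` polynomial, so `M(z)ⁿ` carries the factor `z ^ ⌊n/2⌋`; negative powers go through
`A⁻¹ = (det A)⁻¹ adj A` with `det A(z) = -z`. Altogether `A(z)ᵏ = (z - 1)^(-|k|) z^⌊k/2⌋ Bₖ(z)` with
`Bₖ` polynomial. For `k = N - m'` and `d = y - N/2` we have `|k| ≤ N` and `2d + k = 2y - m' ≥ 0`,
so `(z - 1)^N z^d` cancels both poles. The contour integral is then Cauchy's formula for the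
polynomial entries, which differ from the integrand only at `0` and `1`.
-/

open Matrix

/-- The matrix symbol `A(z)` of the two-periodic Aztec diamond. -/
noncomputable def symbA (α β : ℝ) (z : ℂ) : Matrix (Fin 2) (Fin 2) ℂ :=
  (z - 1)⁻¹ • !![2 * (α : ℂ) * z, (α : ℂ) * (z + 1);
                 (β : ℂ) * z * (z + 1), 2 * (β : ℂ) * z]

open Polynomial

theorem exists_pow_eq_pow_div_two_smul {R A : Type*} [CommSemiring R] [Semiring A] [Algebra R A]
    {G P : A} {x : R} (h : G ^ 2 = x • P) (k : ℕ) : ∃ B : A, G ^ k = x ^ (k / 2) • B :=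
  ⟨P ^ (k / 2) * G ^ (k % 2), by
    rw [← smul_mul_assoc, ← _root_.smul_pow, ← h, ← pow_mul, ← pow_add, Nat.div_add_mod]⟩

theorem two_pi_I_inv_mul_circleIntegral_sub_inv_mul_of_eq_off_countable {f g : ℂ → ℂ}
    {S : Set ℂ} {c s : ℂ} {R : ℝ} (hS : S.Countable) (hg : Differentiable ℂ g)
    (hfg : ∀ z ∉ S, f z = g z) (hs : s ∈ Metric.ball c R) :
    (2 * Real.pi * Complex.I)⁻¹ * (∮ z in C(c, R), (z - s)⁻¹ * f z) = g s := by
  have hR : R ≠ 0 := (Metric.pos_of_mem_ball hs).ne'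
  have hfg_circle : (∮ z in C(c, R), (z - s)⁻¹ * f z) = ∮ z in C(c, R), (z - s)⁻¹ • g z := by
    refine intervalIntegral.integral_congr_ae
      (((hS.preimage_circleMap c hR).ae_notMem _).mono fun θ hθ _ => ?_)
    simp only [hfg _ hθ, smul_eq_mul]
  rw [hfg_circle, ← smul_eq_mul]
  exact hg.diffContOnCl.two_pi_i_inv_smul_circleIntegral_sub_inv_smul hs

section SymbolNumerator

variable {R : Type*} [CommRing R]

noncomputable def symbNum (a b : R) : Matrix (Fin 2) (Fin 2) R[X] :=
  !![2 * C a * X, C a * (X + 1); C b * X * (X + 1), 2 * C b * X]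

theorem exists_symbNum_sq_eq_X_smul {a b : R} (hab : a * b = 1) :
    ∃ P : Matrix (Fin 2) (Fin 2) R[X], symbNum a b ^ 2 = (X : R[X]) • P := by
  have hab' : (C a * C b : R[X]) = 1 := by rw [← C_mul, hab, C_1]
  refine ⟨!![4 * (C a : R[X]) ^ 2 * X + (X + 1) ^ 2, 2 * C a * (C a + C b) * (X + 1);
    2 * C b * (C a + C b) * X * (X + 1), (X + 1) ^ 2 + 4 * C b ^ 2 * X], ?_⟩
  rw [sq, symbNum]
  ext i j : 1
  fin_cases i <;> fin_cases j <;>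
    simp only [Fin.zero_eta, Fin.mk_one, Fin.isValue, Matrix.mul_apply, Fin.sum_univ_two, of_apply,
      cons_val', cons_val_fin_one, cons_val_zero, cons_val_one, Matrix.smul_apply, smul_eq_mul] <;>
    first | ring1 | linear_combination ((X : R[X]) * (X + 1) ^ 2) * hab'

end SymbolNumerator

theorem symbA_eq_smul_map (α β : ℝ) (z : ℂ) :
    symbA α β z = (z - 1)⁻¹ • (symbNum (α : ℂ) β).map (eval z) := by
  rw [symbA, symbNum]
  congr 1
  ext i j
  fin_cases i <;> fin_cases j <;> simp

theorem det_symbA {α β : ℝ} (hαβ : α * β = 1) {z : ℂ} (hz : z ≠ 1) :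
    (symbA α β z).det = -z := by
  have hαβ' : (α : ℂ) * β = 1 := by exact_mod_cast hαβ
  have hz' : z - 1 ≠ 0 := sub_ne_zero.2 hz
  rw [symbA, det_smul, det_fin_two_of, Fintype.card_fin]
  field_simp
  linear_combination -z * (z - 1) ^ 2 * hαβ'

theorem exists_symbA_pow {α β : ℝ} (hαβ : α * β = 1) (n : ℕ) :
    ∃ B : Matrix (Fin 2) (Fin 2) ℂ[X], ∀ z : ℂ,
      symbA α β z ^ n = (((z - 1) ^ n)⁻¹ * z ^ (n / 2)) • B.map (eval z) := by
  obtain ⟨P, hP⟩ := exists_symbNum_sq_eq_X_smul (a := (α : ℂ)) (b := β) (by exact_mod_cast hαβ)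
  obtain ⟨B, hB⟩ := exists_pow_eq_pow_div_two_smul hP n
  refine ⟨B, fun z => ?_⟩
  have hmap := Matrix.map_pow (symbNum (α : ℂ) β) (evalRingHom z) n
  rw [coe_evalRingHom] at hmap
  rw [symbA_eq_smul_map, _root_.smul_pow, ← hmap, hB, Matrix.map_smul' _ _ _ fun _ _ => eval_mul,
    smul_smul, inv_pow, eval_pow, eval_X]

theorem exists_symbA_zpow {α β : ℝ} (hαβ : α * β = 1) (k : ℤ) :
    ∃ B : Matrix (Fin 2) (Fin 2) ℂ[X], ∀ z : ℂ, z ≠ 0 → z ≠ 1 →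
      symbA α β z ^ k = (((z - 1) ^ k.natAbs)⁻¹ * z ^ (k / 2)) • B.map (eval z) := by
  obtain ⟨n, rfl | rfl⟩ := Int.eq_nat_or_neg k
  · obtain ⟨B, hB⟩ := exists_symbA_pow hαβ n
    refine ⟨B, fun z _ _ => ?_⟩
    rw [zpow_natCast, hB, Int.natAbs_natCast, show (n : ℤ) / 2 = (n / 2 : ℕ) by omega,
      zpow_natCast]
  · obtain ⟨B, hB⟩ := exists_symbA_pow hαβ n
    refine ⟨C ((-1 : ℂ) ^ n) • B.adjugate, fun z hz0 hz1 => ?_⟩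
    have hdiv : -(n : ℤ) / 2 = (n / 2 : ℕ) - n := by omega
    have hadj := RingHom.map_adjugate (evalRingHom z) B
    simp only [RingHom.mapMatrix_apply, coe_evalRingHom] at hadj
    rw [zpow_neg_natCast, inv_def, Ring.inverse_eq_inv, det_pow, det_symbA hαβ hz1, hB,
      adjugate_smul, Fintype.card_fin, ← hadj, Matrix.map_smul' _ _ _ fun _ _ => eval_mul,
      smul_smul, smul_smul, eval_C, Int.natAbs_neg, Int.natAbs_natCast, hdiv,
      zpow_sub₀ hz0, zpow_natCast, zpow_natCast, neg_pow]
    congr 1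
    have hz1' : z - 1 ≠ 0 := sub_ne_zero.2 hz1
    rw [show 2 - 1 = 1 from rfl, pow_one]
    field_simp
    rw [← pow_mul, mul_comm, pow_mul, neg_one_sq, one_pow]

theorem exists_polynomial_eq_smul_symbA_zpow {α β : ℝ} (hαβ : α * β = 1) (N : ℕ) {k d : ℤ}
    (hkN : k.natAbs ≤ N) (hdk : 0 ≤ 2 * d + k) :
    ∃ Q : Matrix (Fin 2) (Fin 2) ℂ[X], ∀ z : ℂ, z ≠ 0 → z ≠ 1 →
      Q.map (eval z) = ((z - 1) ^ N * z ^ d) • symbA α β z ^ k := by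
  obtain ⟨B, hB⟩ := exists_symbA_zpow hαβ k
  obtain ⟨e, he⟩ : ∃ e : ℕ, (e : ℤ) = d + k / 2 := ⟨(d + k / 2).toNat, by omega⟩
  refine ⟨(((X : ℂ[X]) - 1) ^ (N - k.natAbs) * X ^ e) • B, fun z hz0 hz1 => ?_⟩
  have hz1' : z - 1 ≠ 0 := sub_ne_zero.2 hz1
  rw [hB z hz0 hz1, Matrix.map_smul' _ _ _ fun _ _ => eval_mul, smul_smul]
  congr 1
  rw [eval_mul, eval_pow, eval_pow, eval_sub, eval_X, eval_one, ← zpow_natCast z e, he,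
    zpow_add₀ hz0]
  nth_rewrite 2 [← Nat.sub_add_cancel hkN]
  field_simp
  rw [pow_add]

theorem residue_no_pole_at_zero_one_general (α β : ℝ)
    (hαβ : α * β = 1) (N : ℕ) (hNeven : Even N)
    (m' y : ℤ) (hm'0 : 0 ≤ m') (hm' : m' ≤ 2 * N) (hy : (m' : ℤ) ≤ 2 * y) :
    (∃ Q : Matrix (Fin 2) (Fin 2) (Polynomial ℂ),
      ∀ w : ℂ, w ≠ 0 → w ≠ 1 →
        (Matrix.of fun i j => (Q i j).eval w) =
          ((w - 1) ^ N * w ^ (y - (N : ℤ) / 2)) • symbA α β w ^ ((N : ℤ) - m')) ∧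
    (∀ (s : ℂ) (R : ℝ), s ≠ 0 → s ≠ 1 → ‖s‖ < R →
      (Matrix.of fun i j =>
          (2 * (Real.pi : ℂ) * Complex.I)⁻¹ *
            ∮ w in C(0, R),
              ((w - 1) ^ N * w ^ (y - (N : ℤ) / 2) * (w - s)⁻¹) *
                (symbA α β w ^ ((N : ℤ) - m')) i j) =
        ((s - 1) ^ N * s ^ (y - (N : ℤ) / 2)) • symbA α β s ^ ((N : ℤ) - m')) := by
  have hdk : 0 ≤ 2 * (y - (N : ℤ) / 2) + (N - m') := by
    obtain ⟨t, rfl⟩ := hNeven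
    omega
  obtain ⟨Q, hQ⟩ := exists_polynomial_eq_smul_symbA_zpow hαβ N (by omega) hdk
  refine ⟨⟨Q, hQ⟩, fun s R hs0 hs1 hsR => ?_⟩
  ext i j
  have hQij : ∀ w ∉ ({0, 1} : Set ℂ), ((w - 1) ^ N * w ^ (y - (N : ℤ) / 2)) *
      (symbA α β w ^ ((N : ℤ) - m')) i j = (Q i j).eval w := fun w hw => by
    simp only [Set.mem_insert_iff, Set.mem_singleton_iff, not_or] at hw
    rw [← smul_eq_mul, ← Matrix.smul_apply, ← hQ w hw.1 hw.2, map_apply]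
  have hcauchy := two_pi_I_inv_mul_circleIntegral_sub_inv_mul_of_eq_off_countable
    (Set.toFinite {0, 1}).countable (Q i j).differentiable hQij (mem_ball_zero_iff.2 hsR)
  rw [of_apply, Matrix.smul_apply, smul_eq_mul, hQij s (by simp [hs0, hs1]), ← hcauchy]
  congr 2
  ext w
  ring

/-- For `N ≥ 2` even and integers `0 ≤ m' ≤ 2N`, `2y ≥ m'`, the function
`w ↦ (w-1)^N A(w)^{N-m'} w^{y-N/2}` extends to a 2×2 matrix polynomial `Q`, and
consequently, by Cauchy's formula, for every circle centered at `0` whose interior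
contains a point `s ∉ {0,1}`,
`(2πi)⁻¹ ∮ (w-1)^N A(w)^{N-m'} w^{y-N/2} (w-s)⁻¹ dw = (s-1)^N A(s)^{N-m'} s^{y-N/2}`. -/
theorem residue_no_pole_at_zero_one (α β : ℝ) (hα : 0 < α) (hβ : 0 < β)
    (hαβ : α * β = 1) (N : ℕ) (hN2 : 2 ≤ N) (hNeven : Even N)
    (m' y : ℤ) (hm'0 : 0 ≤ m') (hm' : m' ≤ 2 * N) (hy : (m' : ℤ) ≤ 2 * y) :
    (∃ Q : Matrix (Fin 2) (Fin 2) (Polynomial ℂ),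
      ∀ w : ℂ, w ≠ 0 → w ≠ 1 →
        (Matrix.of fun i j => (Q i j).eval w) =
          ((w - 1) ^ N * w ^ (y - (N : ℤ) / 2)) • symbA α β w ^ ((N : ℤ) - m')) ∧
    (∀ (s : ℂ) (R : ℝ), s ≠ 0 → s ≠ 1 → ‖s‖ < R →
      (Matrix.of fun i j =>
          (2 * (Real.pi : ℂ) * Complex.I)⁻¹ *
            ∮ w in C(0, R),
              ((w - 1) ^ N * w ^ (y - (N : ℤ) / 2) * (w - s)⁻¹) *
                (symbA α β w ^ ((N : ℤ) - m')) i j) =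
        ((s - 1) ^ N * s ^ (y - (N : ℤ) / 2)) • symbA α β s ^ ((N : ℤ) - m')) :=
  residue_no_pole_at_zero_one_general α β hαβ N hNeven m' y hm'0 hm' hy
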